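/- (Semantic content of Theorem 2, second case.) Let κ be a ranking function on Ω, A ⊆ Ω an event with κ(A) < ∞ and κ(Aᶜ) < ∞, and x ∈ ℕ∞ a rank with x < κ(A). Then the L-conditioning of κ by A with strength x equals the J-conditioning of κ by Aᶜ with strength κ(A) − x: for every event B, κ_{A↑x}(B) = κ_{Aᶜ→(κ(A) − x)}(B). -/

import Mathlib

/-- Rank of an event. -/
noncomputable def rnk {Ω : Type*} (κ : Ω → ℕ∞) (A : Set Ω) : ℕ∞ := ⨅ w ∈ A, κ w

/-- Conditional rank κ(B | C) = κ(B ∩ C) − κ(C). -/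
noncomputable def crank {Ω : Type*} (κ : Ω → ℕ∞) (B C : Set Ω) : ℕ∞ :=
  rnk κ (B ∩ C) - rnk κ C

/-- J-conditioning of κ by A with strength x. -/
noncomputable def jcond {Ω : Type*} (κ : Ω → ℕ∞) (A : Set Ω) (x : ℕ∞) (B : Set Ω) : ℕ∞ :=
  min (crank κ B A) (crank κ B Aᶜ + x)

/-- L-conditioning of κ by A with strength x. -/
noncomputable def lcond {Ω : Type*} (κ : Ω → ℕ∞) (A : Set Ω) (x : ℕ∞) (B : Set Ω) : ℕ∞ :=
  min (rnk κ (A ∩ B) - min (rnk κ A) x) (rnk κ (Aᶜ ∩ B) + x - min (rnk κ A) x)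

/-! Since `x < κ(A)`, the normalisation `min (κ(A), κ(Aᶜ)) = 0` forces `κ(Aᶜ) = 0`, so conditioning
on `Aᶜ` leaves ranks inside `Aᶜ` unchanged, while `κ(B | A) + (κ(A) − x) = κ(A ∩ B) − x`. With
`y = min (κ(A), x) = x` the L-conditioning takes exactly these two values on `Aᶜ ∩ B` and `A ∩ B`. -/

section Rank

variable {Ω : Type*} (κ : Ω → ℕ∞)

theorem rnk_union (A B : Set Ω) : rnk κ (A ∪ B) = min (rnk κ A) (rnk κ B) :=
  iInf_union

theorem rnk_anti {A B : Set Ω} (h : A ⊆ B) : rnk κ B ≤ rnk κ A :=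
  biInf_mono h

theorem rnk_compl_eq_zero {A : Set Ω} (hκ : (⨅ w, κ w) = 0) (hA : rnk κ A ≠ 0) :
    rnk κ Aᶜ = 0 := by
  have hmin : min (rnk κ A) (rnk κ Aᶜ) = 0 := by
    rw [← rnk_union, Set.union_compl_self, ← hκ, rnk, iInf_univ]
  exact (min_eq_bot.mp hmin).resolve_left hA

theorem crank_of_rnk_eq_zero {C : Set Ω} (hC : rnk κ C = 0) (B : Set Ω) :
    crank κ B C = rnk κ (B ∩ C) := by
  rw [crank, hC, tsub_zero]

theorem crank_add_rnk_tsub {A : Set Ω} {x : ℕ∞} (hx : x ≤ rnk κ A) (B : Set Ω) :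
    crank κ B A + (rnk κ A - x) = rnk κ (B ∩ A) - x :=
  tsub_add_tsub_cancel (rnk_anti κ Set.inter_subset_right) hx

theorem lcond_of_le {A : Set Ω} {x : ℕ∞} (hx : x ≤ rnk κ A) (hx_top : x ≠ ⊤) (B : Set Ω) :
    lcond κ A x B = min (rnk κ (A ∩ B) - x) (rnk κ (Aᶜ ∩ B)) := by
  rw [lcond, min_eq_right hx, (ENat.addLECancellable_of_ne_top hx_top).add_tsub_cancel_right]

end Rank

theorem lcond_eq_jcond_compl_of_lt_rank_general {Ω : Type*}
    (κ : Ω → ℕ∞) (hκ : (⨅ w, κ w) = 0) (A : Set Ω)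
    (x : ℕ∞) (hx : x < rnk κ A) :
    ∀ B : Set Ω, lcond κ A x B = jcond κ Aᶜ (rnk κ A - x) B := by
  intro B
  have hAc : rnk κ Aᶜ = 0 := rnk_compl_eq_zero κ hκ hx.ne_bot
  rw [lcond_of_le κ hx.le hx.ne_top, jcond, compl_compl, crank_of_rnk_eq_zero κ hAc,
    crank_add_rnk_tsub κ hx.le, Set.inter_comm B, Set.inter_comm B, min_comm]

/-- when x < κ(A), L-conditioning by A with strength x equals
J-conditioning by Aᶜ with strength κ(A) − x. -/
theorem lcond_eq_jcond_compl_of_lt_rank {Ω : Type*} [Fintype Ω] [Nonempty Ω]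
    (κ : Ω → ℕ∞) (hκ : (⨅ w, κ w) = 0) (A : Set Ω)
    (hA : rnk κ A < ⊤) (hAc : rnk κ Aᶜ < ⊤) (x : ℕ∞) (hx : x < rnk κ A) :
    ∀ B : Set Ω, lcond κ A x B = jcond κ Aᶜ (rnk κ A - x) B :=
  lcond_eq_jcond_compl_of_lt_rank_general κ hκ A x hx
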